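/- arXiv:1305.6042 — 3 statements merged into one kernel-verified Lean document; each statement's English description precedes it below -/
import Mathlib

section
/- For a unit quaternion of the form q = e^{x i} with x ≢ 0 mod π/2, the intersection of the binary dihedral group B with its conjugate q B q⁻¹ equals {±1, ±i} if x ≢ π/4 mod π/2, and equals {±1, ±i, ±j, ±k} if x ≡ π/4 mod π/2; if x ≡ 0 mod π/2 the intersection is all of B. -/
noncomputable section

/-- `e^{xk} = cos x + sin x · k`. -/
def eK (x : ℝ) : Quaternion ℝ := ⟨Real.cos x, 0, 0, Real.sin x⟩

/-- `e^{xi} = cos x + sin x · i`. -/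
def eI (x : ℝ) : Quaternion ℝ := ⟨Real.cos x, Real.sin x, 0, 0⟩

/-- The binary dihedral group `B = {e^{ak}} ∪ {e^{ak}·i}` as a subset of the
quaternions. -/
def Bset : Set (Quaternion ℝ) :=
  {q | ∃ a : ℝ, q = eK a} ∪ {q | ∃ a : ℝ, q = ⟨0, Real.cos a, Real.sin a, 0⟩}

/-- The quaternion group `Q₈ = {±1, ±i, ±j, ±k}`. -/
def Q8set : Set (Quaternion ℝ) :=
  {1, -1, ⟨0,1,0,0⟩, -⟨0,1,0,0⟩, ⟨0,0,1,0⟩, -⟨0,0,1,0⟩, ⟨0,0,0,1⟩, -⟨0,0,0,1⟩}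

/-!
Conjugation by `e^{xi}` fixes `1` and `i` and rotates the `(j, k)`-plane by the angle `2x`.
Hence `e^{ak}`, and likewise `e^{ak}·i`, lies in `e^{xi} B e^{-xi}` exactly when
`sin a · sin 2x = 0` or `cos a = cos 2x = 0`. The three cases of the theorem are
`sin 2x = 0` (every `a` qualifies), `cos 2x = 0` (`a ∈ (π/2)ℤ`) and neither (`a ∈ πℤ`).
-/

open Real
open scoped Quaternion

lemma exists_cos_sin_eq_of_sq_add_sq_eq_one {r w : ℝ} (h : r ^ 2 + w ^ 2 = 1) :
    ∃ a, cos a = r ∧ sin a = w := by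
  set z : ℂ := ⟨r, w⟩
  have hz : ‖z‖ = 1 := by
    have : ‖z‖ ^ 2 = 1 := by rw [Complex.sq_norm, Complex.normSq_mk]; linear_combination h
    nlinarith [norm_nonneg z]
  have hz0 : z ≠ 0 := norm_ne_zero_iff.mp (by simp [hz])
  exact ⟨z.arg, by simp [Complex.cos_arg hz0, hz, z], by simp [Complex.sin_arg, hz, z]⟩

lemma mem_image_conj_iff {G₀ : Type*} [GroupWithZero G₀] {u : G₀} (hu : u ≠ 0) {S : Set G₀}
    {q : G₀} : q ∈ (fun p => u * p * u⁻¹) '' S ↔ u⁻¹ * q * u ∈ S := by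
  constructor
  · rintro ⟨p, hp, rfl⟩
    simpa [mul_assoc, hu] using hp
  · exact fun h => ⟨_, h, by simp [← mul_assoc, hu]⟩

section CircleImages

variable {M : Type*} [AddCommGroup M] [Module ℝ M] (p q : M)

lemma image_setOf_sin_eq_zero :
    (fun a => cos a • p + sin a • q) '' {a | sin a = 0} = {p, -p} := by
  ext v
  constructor
  · rintro ⟨a, ha : sin a = 0, rfl⟩
    rcases sin_eq_zero_iff_cos_eq.mp ha with h | h <;> simp [ha, h]
  · rintro (rfl | rfl)
    · exact ⟨0, by simp, by simp⟩
    · exact ⟨π, by simp, by simp⟩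

lemma image_setOf_cos_eq_zero :
    (fun a => cos a • p + sin a • q) '' {a | cos a = 0} = {q, -q} := by
  ext v
  constructor
  · rintro ⟨a, ha : cos a = 0, rfl⟩
    rcases cos_eq_zero_iff_sin_eq.mp ha with h | h <;> simp [ha, h]
  · rintro (rfl | rfl)
    · exact ⟨π / 2, by simp, by simp⟩
    · exact ⟨-(π / 2), by simp, by simp⟩

end CircleImages

lemma sin_two_mul_eq_zero_iff {x : ℝ} : sin (2 * x) = 0 ↔ ∃ n : ℤ, x = n * (π / 2) := by
  rw [sin_eq_zero_iff]
  constructor <;> rintro ⟨n, hn⟩ <;> exact ⟨n, by linarith⟩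

lemma cos_two_mul_eq_zero_iff {x : ℝ} :
    cos (2 * x) = 0 ↔ ∃ n : ℤ, x = π / 4 + n * (π / 2) := by
  rw [cos_eq_zero_iff]
  constructor <;> rintro ⟨n, hn⟩ <;> exact ⟨n, by linarith⟩

/-- `e^{ak} · i`. -/
def eKi (a : ℝ) : ℍ[ℝ] := ⟨0, cos a, sin a, 0⟩

/- Named units: a bare literal `⟨0, 1, 0, 0⟩` elaborates at type `QuaternionAlgebra ℝ (-1) 0 (-1)`
rather than `ℍ[ℝ]`, which blocks `rw` and `simp` on terms containing it. -/
def quatI : ℍ[ℝ] := ⟨0, 1, 0, 0⟩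

def quatJ : ℍ[ℝ] := ⟨0, 0, 1, 0⟩

def quatK : ℍ[ℝ] := ⟨0, 0, 0, 1⟩

section Components

variable (x : ℝ)

@[simp] lemma eI_re : (eI x).re = cos x := rfl
@[simp] lemma eI_imI : (eI x).imI = sin x := rfl
@[simp] lemma eI_imJ : (eI x).imJ = 0 := rfl
@[simp] lemma eI_imK : (eI x).imK = 0 := rfl
@[simp] lemma eK_re : (eK x).re = cos x := rfl
@[simp] lemma eK_imI : (eK x).imI = 0 := rfl
@[simp] lemma eK_imJ : (eK x).imJ = 0 := rfl
@[simp] lemma eK_imK : (eK x).imK = sin x := rfl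
@[simp] lemma eKi_re : (eKi x).re = 0 := rfl
@[simp] lemma eKi_imI : (eKi x).imI = cos x := rfl
@[simp] lemma eKi_imJ : (eKi x).imJ = sin x := rfl
@[simp] lemma eKi_imK : (eKi x).imK = 0 := rfl

end Components

lemma Bset_eq : Bset = Set.range eK ∪ Set.range eKi :=
  Set.ext fun _ => or_congr (exists_congr fun _ => eq_comm) (exists_congr fun _ => eq_comm)

lemma eK_eq_smul : eK = fun a => cos a • 1 + sin a • quatK := by
  funext a; ext <;> simp <;> simp [quatK]

lemma eKi_eq_smul : eKi = fun a => cos a • quatI + sin a • quatJ := by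
  funext a; ext <;> simp <;> simp [quatI, quatJ]

lemma Q8set_eq : Q8set = {1, -1, quatI, -quatI, quatJ, -quatJ, quatK, -quatK} := rfl

lemma mem_Bset_iff (q : ℍ[ℝ]) :
    q ∈ Bset ↔ (q.imI = 0 ∧ q.imJ = 0 ∧ q.re ^ 2 + q.imK ^ 2 = 1) ∨
      (q.re = 0 ∧ q.imK = 0 ∧ q.imI ^ 2 + q.imJ ^ 2 = 1) := by
  rw [Bset_eq]
  constructor
  · rintro (⟨a, rfl⟩ | ⟨a, rfl⟩)
    · exact Or.inl ⟨rfl, rfl, cos_sq_add_sin_sq a⟩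
    · exact Or.inr ⟨rfl, rfl, cos_sq_add_sin_sq a⟩
  · rintro (⟨hi, hj, h⟩ | ⟨hr, hk, h⟩)
    · obtain ⟨a, hc, hs⟩ := exists_cos_sin_eq_of_sq_add_sq_eq_one h
      exact Or.inl ⟨a, by ext <;> simp [*]⟩
    · obtain ⟨a, hc, hs⟩ := exists_cos_sin_eq_of_sq_add_sq_eq_one h
      exact Or.inr ⟨a, by ext <;> simp [*]⟩

lemma eI_add (x y : ℝ) : eI (x + y) = eI x * eI y := by
  ext <;> simp [cos_add, sin_add]; ring

lemma eI_mul_eI_neg (x : ℝ) : eI x * eI (-x) = 1 := by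
  rw [← eI_add, add_neg_cancel]; ext <;> simp

lemma eI_inv (x : ℝ) : (eI x)⁻¹ = eI (-x) :=
  inv_eq_of_mul_eq_one_right (eI_mul_eI_neg x)

lemma eI_ne_zero (x : ℝ) : eI x ≠ 0 :=
  left_ne_zero_of_mul_eq_one (eI_mul_eI_neg x)

lemma eI_neg_mul_eK_mul_eI (x a : ℝ) :
    eI (-x) * eK a * eI x = ⟨cos a, 0, sin a * sin (2 * x), sin a * cos (2 * x)⟩ := by
  ext <;> simp [sin_two_mul, cos_two_mul] <;> ring_nf <;> simp only [cos_sq'] <;> ring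

lemma eI_neg_mul_eKi_mul_eI (x a : ℝ) :
    eI (-x) * eKi a * eI x = ⟨0, cos a, sin a * cos (2 * x), -(sin a * sin (2 * x))⟩ := by
  ext <;> simp [sin_two_mul, cos_two_mul] <;> ring_nf <;> simp only [cos_sq'] <;> ring

/-- The criterion of `mem_Bset_iff` for `cos a + sin a · (s j + c k)`, and also for its
product with `i` on the right. -/
lemma rotated_circle_mem_Bset_iff {a c s : ℝ} (h : c ^ 2 + s ^ 2 = 1) :
    (sin a * s = 0 ∧ cos a ^ 2 + (sin a * c) ^ 2 = 1) ∨
        (cos a = 0 ∧ sin a * c = 0 ∧ (sin a * s) ^ 2 = 1) ↔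
      sin a * s = 0 ∨ (cos a = 0 ∧ c = 0) := by
  have ha := sin_sq_add_cos_sq a
  constructor
  · rintro (⟨hs, -⟩ | ⟨hca, hc, -⟩)
    · exact Or.inl hs
    · have hsa : sin a ≠ 0 := fun h0 => by simp [h0, hca] at ha
      exact Or.inr ⟨hca, (mul_eq_zero.mp hc).resolve_left hsa⟩
  · rintro (hs | ⟨hca, hc⟩)
    · exact Or.inl ⟨hs, by linear_combination ha + sin a ^ 2 * h - sin a * s * hs⟩
    · refine Or.inr ⟨hca, by simp [hc], ?_⟩
      linear_combination sin a ^ 2 * h + ha - sin a ^ 2 * c * hc - cos a * hca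

lemma eK_mem_image_conj_iff (x a : ℝ) :
    eK a ∈ (fun q => eI x * q * (eI x)⁻¹) '' Bset ↔
      sin a * sin (2 * x) = 0 ∨ (cos a = 0 ∧ cos (2 * x) = 0) := by
  rw [mem_image_conj_iff (eI_ne_zero x), eI_inv, mem_Bset_iff, eI_neg_mul_eK_mul_eI,
    ← rotated_circle_mem_Bset_iff (cos_sq_add_sin_sq (2 * x))]
  simp

lemma eKi_mem_image_conj_iff (x a : ℝ) :
    eKi a ∈ (fun q => eI x * q * (eI x)⁻¹) '' Bset ↔
      sin a * sin (2 * x) = 0 ∨ (cos a = 0 ∧ cos (2 * x) = 0) := by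
  rw [mem_image_conj_iff (eI_ne_zero x), eI_inv, mem_Bset_iff, eI_neg_mul_eKi_mul_eI,
    ← rotated_circle_mem_Bset_iff (cos_sq_add_sin_sq (2 * x)), or_comm]
  simp

lemma inter_image_conj_eq (x : ℝ) :
    Bset ∩ (fun q => eI x * q * (eI x)⁻¹) '' Bset =
      eK '' {a | sin a * sin (2 * x) = 0 ∨ (cos a = 0 ∧ cos (2 * x) = 0)} ∪
        eKi '' {a | sin a * sin (2 * x) = 0 ∨ (cos a = 0 ∧ cos (2 * x) = 0)} := by
  ext q
  rw [Bset_eq]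
  constructor
  · rintro ⟨⟨a, rfl⟩ | ⟨a, rfl⟩, hconj⟩
    · exact Or.inl ⟨a, (eK_mem_image_conj_iff x a).mp (Bset_eq ▸ hconj), rfl⟩
    · exact Or.inr ⟨a, (eKi_mem_image_conj_iff x a).mp (Bset_eq ▸ hconj), rfl⟩
  · rintro (⟨a, ha, rfl⟩ | ⟨a, ha, rfl⟩)
    · exact ⟨Or.inl ⟨a, rfl⟩, Bset_eq ▸ (eK_mem_image_conj_iff x a).mpr ha⟩
    · exact ⟨Or.inr ⟨a, rfl⟩, Bset_eq ▸ (eKi_mem_image_conj_iff x a).mpr ha⟩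

/-- Computation of `B ∩ e^{xi} B e^{-xi}` in the three cases
`x ≡ 0 mod π/2`, `x ≡ π/4 mod π/2`, and otherwise. -/
theorem binaryDihedral_inter_conj (x : ℝ) :
    ((∃ n : ℤ, x = n * (Real.pi / 2)) →
      Bset ∩ ((fun q => eI x * q * (eI x)⁻¹) '' Bset) = Bset) ∧
    ((∃ n : ℤ, x = Real.pi / 4 + n * (Real.pi / 2)) →
      Bset ∩ ((fun q => eI x * q * (eI x)⁻¹) '' Bset) = Q8set) ∧
    ((¬ ∃ n : ℤ, x = n * (Real.pi / 2)) →
     (¬ ∃ n : ℤ, x = Real.pi / 4 + n * (Real.pi / 2)) →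
      Bset ∩ ((fun q => eI x * q * (eI x)⁻¹) '' Bset) =
        {1, -1, ⟨0,1,0,0⟩, -⟨0,1,0,0⟩}) := by
  rw [inter_image_conj_eq, ← sin_two_mul_eq_zero_iff, ← cos_two_mul_eq_zero_iff]
  refine ⟨fun hs => ?_, fun hc => ?_, fun hs hc => ?_⟩
  · simp [hs, Bset_eq]
  · have hs : sin (2 * x) ≠ 0 := fun hs => by simpa [hs, hc] using sin_sq_add_cos_sq (2 * x)
    simp only [hs, hc, mul_eq_zero, or_false, and_true, Set.ofPred_or, Set.image_union,
      eK_eq_smul, eKi_eq_smul, image_setOf_sin_eq_zero, image_setOf_cos_eq_zero]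
    ext q
    simp only [Q8set_eq, Set.mem_union, Set.mem_insert_iff, Set.mem_singleton_iff]
    tauto
  · simp only [hs, hc, mul_eq_zero, or_false, and_false, eK_eq_smul, eKi_eq_smul,
      image_setOf_sin_eq_zero]
    rw [Set.insert_union, Set.singleton_union]
    rfl

end
end

section
/- Let G be a group, let α : G → ℤ be a homomorphism, let H = ker(ᾱ) where ᾱ is the mod-2 reduction of α, and fix a ∈ G with α(a) = 1. Suppose ℓ : H → S¹ is a homomorphism satisfying ℓ(a β a⁻¹) = ℓ(β)⁻¹ for all β ∈ H. Then the map ρ_ℓ : G → unit quaternions defined by ρ_ℓ(β) = i^{α(β)} · ℓ(a^{−α(β)} β) (viewing S¹ as {e^{x k}}) is a group homomorphism. -/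
/-!
Since `α(a) = 1`, every `β` factors as `a^{α(β)} · x` with `x = a^{-α(β)} β` in `ker α`, so `G` is
the semidirect product `ker α ⋊ ℤ` and `ρ_ℓ` is the map it induces from `ℓ` on `ker α` and from
`1 ↦ i`. Such a map is multiplicative as soon as `i` implements on `ℓ(ker α)` the conjugation by
`a`; here conjugation by `i` is complex conjugation on the circle `{e^{xk}}`, and `ℓ(aβa⁻¹)` is
`ℓ(β)⁻¹ = conj ℓ(β)` because `ℓ` is circle valued.
-/

noncomputable section

/-- The embedding of the circle `S¹ ⊆ ℂ` onto the maximal torus `{e^{xk}}` of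
the quaternions, sending `e^{ix}` to `e^{xk}`. -/
def toQk (z : ℂ) : Quaternion ℝ := ⟨z.re, 0, 0, z.im⟩

/-- The quaternion `i`. -/
def qi : Quaternion ℝ := ⟨0, 1, 0, 0⟩

open Multiplicative

section TwistedExtension

variable {G M : Type*} [Group G] [GroupWithZero M]

theorem semiconjBy_zpow_of_semiconjBy (N : Subgroup G) [hN : N.Normal] (a : G) {q : M}
    (hq : q ≠ 0) {f : G → M} (hsemi : ∀ y ∈ N, SemiconjBy q (f (a⁻¹ * y * a)) (f y)) (n : ℤ) :
    ∀ y ∈ N, SemiconjBy (q ^ n) (f ((a ^ n)⁻¹ * y * a ^ n)) (f y) := by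
  induction n using Int.induction_on with
  | zero => simp
  | succ n ih =>
    intro y hy
    have hconj : (a ^ ((n : ℤ) + 1))⁻¹ * y * a ^ ((n : ℤ) + 1)
        = a⁻¹ * ((a ^ (n : ℤ))⁻¹ * y * a ^ (n : ℤ)) * a := by
      rw [zpow_add_one]; group
    rw [zpow_add_one₀ hq, hconj]
    have hmem : (a ^ (n : ℤ))⁻¹ * y * a ^ (n : ℤ) ∈ N := by
      simpa using hN.conj_mem y hy (a ^ (n : ℤ))⁻¹
    exact (ih y hy).mul_left (hsemi _ hmem)
  | pred n ih =>
    intro y hy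
    have hconj : (a ^ (-(n : ℤ) - 1))⁻¹ * y * a ^ (-(n : ℤ) - 1)
        = a * ((a ^ (-(n : ℤ)))⁻¹ * y * a ^ (-(n : ℤ))) * a⁻¹ := by
      rw [zpow_sub_one]; group
    rw [zpow_sub_one₀ hq, hconj]
    set w := (a ^ (-(n : ℤ)))⁻¹ * y * a ^ (-(n : ℤ))
    have hw : w ∈ N := by simpa [w] using hN.conj_mem y hy (a ^ (-(n : ℤ)))⁻¹
    have hback : SemiconjBy q (f w) (f (a * w * a⁻¹)) := by
      simpa [mul_assoc] using hsemi _ (hN.conj_mem w hw a)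
    exact (ih y hy).mul_left hback.inv_symm_left₀

/-- The map `g ↦ q ^ φ(g) * f(a ^ (-φ(g)) * g)` induced on `G ≅ ker φ ⋊ ℤ` by `f` on `ker φ`
and `q` on the generator of `ℤ`. -/
def twistedExtension (φ : G →* Multiplicative ℤ) (a : G) (q : M) (f : G → M) (g : G) : M :=
  q ^ toAdd (φ g) * f ((a ^ toAdd (φ g))⁻¹ * g)

theorem inv_zpow_mul_mem_ker {φ : G →* Multiplicative ℤ} {a : G} (ha : φ a = ofAdd 1) (g : G) :
    (a ^ toAdd (φ g))⁻¹ * g ∈ φ.ker := by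
  rw [MonoidHom.mem_ker, map_mul, map_inv, map_zpow, ha, ← ofAdd_zsmul, smul_eq_mul, mul_one,
    ofAdd_toAdd, inv_mul_cancel]

theorem twistedExtension_mul {φ : G →* Multiplicative ℤ} {a : G} (ha : φ a = ofAdd 1) {q : M}
    (hq : q ≠ 0) {f : G → M} (hf : ∀ x ∈ φ.ker, ∀ y ∈ φ.ker, f (x * y) = f x * f y)
    (hsemi : ∀ y ∈ φ.ker, SemiconjBy q (f (a⁻¹ * y * a)) (f y)) (g h : G) :
    twistedExtension φ a q f (g * h) = twistedExtension φ a q f g * twistedExtension φ a q f h := by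
  obtain ⟨m, hm⟩ : ∃ m, toAdd (φ g) = m := ⟨_, rfl⟩
  obtain ⟨k, hk⟩ : ∃ k, toAdd (φ h) = k := ⟨_, rfl⟩
  have hg : (a ^ m)⁻¹ * g ∈ φ.ker := hm ▸ inv_zpow_mul_mem_ker ha g
  have hh : (a ^ k)⁻¹ * h ∈ φ.ker := hk ▸ inv_zpow_mul_mem_ker ha h
  have hgk : (a ^ k)⁻¹ * ((a ^ m)⁻¹ * g) * a ^ k ∈ φ.ker := by
    simpa using φ.normal_ker.conj_mem _ hg (a ^ k)⁻¹
  have hsplit : (a ^ (m + k))⁻¹ * (g * h)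
      = (a ^ k)⁻¹ * ((a ^ m)⁻¹ * g) * a ^ k * ((a ^ k)⁻¹ * h) := by
    rw [zpow_add]; group
  calc twistedExtension φ a q f (g * h)
      = q ^ m * (q ^ k * f ((a ^ k)⁻¹ * ((a ^ m)⁻¹ * g) * a ^ k)) * f ((a ^ k)⁻¹ * h) := by
        rw [twistedExtension, map_mul, toAdd_mul, hm, hk, hsplit, hf _ hgk _ hh, zpow_add₀ hq]
        simp only [mul_assoc]
    _ = q ^ m * f ((a ^ m)⁻¹ * g) * (q ^ k * f ((a ^ k)⁻¹ * h)) := by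
        rw [(semiconjBy_zpow_of_semiconjBy φ.ker a hq hsemi k _ hg).eq]
        simp only [mul_assoc]
    _ = twistedExtension φ a q f g * twistedExtension φ a q f h := by
        rw [twistedExtension, twistedExtension, hm, hk]

end TwistedExtension

theorem toQk_mul (z w : ℂ) : toQk (z * w) = toQk z * toQk w := by
  ext <;> simp only [Quaternion.re_mul, Quaternion.imI_mul, Quaternion.imJ_mul,
    Quaternion.imK_mul] <;> simp [toQk]

theorem qi_ne_zero : qi ≠ 0 := fun h =>
  one_ne_zero (congrArg QuaternionAlgebra.imI h : (1 : ℝ) = 0)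

theorem qi_mul_toQk_conj (z : ℂ) : qi * toQk (starRingEnd ℂ z) = toQk z * qi := by
  ext <;> simp only [Quaternion.re_mul, Quaternion.imI_mul, Quaternion.imJ_mul,
    Quaternion.imK_mul] <;> simp [toQk, qi]

/-- Let `G` be a group, `α : G → ℤ` a homomorphism, `H = ker(ᾱ)` the kernel of
its mod-2 reduction, and `a ∈ G` with `α(a) = 1`.  If `ℓ : H → S¹` is a
homomorphism with `ℓ(aβa⁻¹) = ℓ(β)⁻¹` for `β ∈ H`, then
`ρ_ℓ(β) = i^{α(β)} · ℓ(a^{-α(β)}β)` defines a group homomorphism from `G` to the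
unit quaternions.  (Here `ℓ` is presented as a circle-valued function on `G`
whose relevant properties hold on `H = {β | α β is even}`.) -/
theorem rho_ell_is_homomorphism (G : Type*) [Group G]
    (α : G → ℤ) (hα : ∀ g h : G, α (g * h) = α g + α h)
    (a : G) (ha : α a = 1)
    (ℓ : G → ℂ)
    (hnorm : ∀ β : G, Even (α β) → ‖ℓ β‖ = 1)
    (hmul : ∀ β₁ β₂ : G, Even (α β₁) → Even (α β₂) →
      ℓ (β₁ * β₂) = ℓ β₁ * ℓ β₂)
    (hconj : ∀ β : G, Even (α β) → ℓ (a * β * a⁻¹) = (ℓ β)⁻¹) :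
    ∀ β₁ β₂ : G,
      qi ^ (α (β₁ * β₂)) * toQk (ℓ (a ^ (-(α (β₁ * β₂))) * (β₁ * β₂))) =
      (qi ^ (α β₁) * toQk (ℓ (a ^ (-(α β₁)) * β₁))) *
      (qi ^ (α β₂) * toQk (ℓ (a ^ (-(α β₂)) * β₂))) := by
  let φ : G →* Multiplicative ℤ := MonoidHom.mk' (fun g => ofAdd (α g)) hα
  have hker : ∀ x ∈ φ.ker, Even (α x) := fun x hx => by
    rw [ofAdd_eq_one.mp hx]; exact Even.zero
  have hsemi : ∀ y ∈ φ.ker, SemiconjBy qi (toQk (ℓ (a⁻¹ * y * a))) (toQk (ℓ y)) := by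
    intro y hy
    have hy' : Even (α (a⁻¹ * y * a)) := by
      simpa using hker _ (φ.normal_ker.conj_mem y hy a⁻¹)
    have hℓ : ℓ (a⁻¹ * y * a) = starRingEnd ℂ (ℓ y) := by
      rw [← Complex.inv_eq_conj (hnorm y (hker y hy)), ← inv_inv (ℓ (a⁻¹ * y * a)),
        ← hconj _ hy']
      group
    rw [hℓ]
    exact qi_mul_toQk_conj (ℓ y)
  have hρ : ∀ β, twistedExtension φ a qi (toQk ∘ ℓ) β = qi ^ α β * toQk (ℓ (a ^ (-α β) * β)) :=
    fun β => by rw [zpow_neg]; rfl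
  intro β₁ β₂
  simpa only [hρ] using
    twistedExtension_mul (φ := φ) (congrArg ofAdd ha) qi_ne_zero (f := toQk ∘ ℓ)
    (fun x hx y hy => by simp [hmul x y (hker x hx) (hker y hy), toQk_mul]) hsemi β₁ β₂

end
end

section
/- The solution set in the unit cube [−1,1]³ of the system p₁(x,y,τ) = xy − √((1−x²)(1−y²))τ = 0 and 16y⁴ − 20y² + 16x²y² − 4x² + 3 = 0 is homeomorphic to a circle; explicitly it is the union of the two arcs parametrized by y ∈ [−√((5−√13)/8), √((5−√13)/8)], x = ±√(1 − y² − 1/(4−16y²)), τ = xy/√((1−x²)(1−y²)), which share exactly their two endpoints (0, ±√((5−√13)/8), 0). -/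
noncomputable section

/-- The solution set `W₂` in the unit cube of the system
`xy = √((1−x²)(1−y²))τ` and `16y⁴ − 20y² + 16x²y² − 4x² + 3 = 0`. -/
def W₂ : Set (ℝ × ℝ × ℝ) :=
  {w | |w.1| ≤ 1 ∧ |w.2.1| ≤ 1 ∧ |w.2.2| ≤ 1 ∧
    w.1 * w.2.1 = Real.sqrt ((1 - w.1 ^ 2) * (1 - w.2.1 ^ 2)) * w.2.2 ∧
    16 * w.2.1 ^ 4 - 20 * w.2.1 ^ 2 + 16 * w.1 ^ 2 * w.2.1 ^ 2 -
      4 * w.1 ^ 2 + 3 = 0}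

/-- The endpoint bound `√((5−√13)/8)`. -/
def yMax : ℝ := Real.sqrt ((5 - Real.sqrt 13) / 8)

/-- The positive-`x` branch `x = √(1 − y² − 1/(4−16y²))`. -/
def xBranch (y : ℝ) : ℝ := Real.sqrt (1 - y ^ 2 - 1 / (4 - 16 * y ^ 2))

/-- The value `τ = xy/√((1−x²)(1−y²))`. -/
def tauOf (x y : ℝ) : ℝ := x * y / Real.sqrt ((1 - x ^ 2) * (1 - y ^ 2))

/-- The arc of `W₂` with `x = √(1 − y² − 1/(4−16y²))`. -/
def arcPos : Set (ℝ × ℝ × ℝ) :=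
  {w | ∃ y ∈ Set.Icc (-yMax) yMax, w = (xBranch y, y, tauOf (xBranch y) y)}

/-- The arc of `W₂` with `x = −√(1 − y² − 1/(4−16y²))`. -/
def arcNeg : Set (ℝ × ℝ × ℝ) :=
  {w | ∃ y ∈ Set.Icc (-yMax) yMax, w = (-xBranch y, y, tauOf (-xBranch y) y)}


/-!
Writing the quartic as `(1 − x² − y²)(4 − 16y²) = 1`, the conditions `p₁ = 0`, `|τ| ≤ 1` say
exactly that `x² + y² < 1` and `τ = tauOf x y`, because `(1 − x²)(1 − y²) = (1 − x² − y²) + (xy)²`.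
Solving for `x²` gives the two arcs, which meet where `x = 0`, i.e. at `y = ±yMax`.

Along the ray through a unit vector `(c, s)` the quartic becomes `(1 − r)(4 − 16 s² r) = 1` in
`r = x² + y²`, which has exactly one root in `(0, 1)`. Hence the radial projection of `W₂` onto
the unit circle is a continuous bijection from a compact space.
-/

open Set

lemma sqrt_thirteen_gt_three : 3 < Real.sqrt 13 := by
  rw [show (3 : ℝ) = Real.sqrt (3 ^ 2) by simp]
  exact Real.sqrt_lt_sqrt (by norm_num) (by norm_num)

lemma yMax_nonneg : 0 ≤ yMax := Real.sqrt_nonneg _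

lemma yMax_sq : yMax ^ 2 = (5 - Real.sqrt 13) / 8 :=
  Real.sq_sqrt (by nlinarith [Real.sq_sqrt (show (0 : ℝ) ≤ 13 by norm_num)])

lemma yMax_sq_lt : yMax ^ 2 < 1 / 4 := by
  rw [yMax_sq]; linarith [sqrt_thirteen_gt_three]

def xBranchSq (y : ℝ) : ℝ := 1 - y ^ 2 - 1 / (4 - 16 * y ^ 2)

/-- From `(4 − 16y²) · xBranchSq y = 16y⁴ − 20y² + 3 = 16 (yMax² − y²)((5 + √13)/8 − y²)`. -/
lemma exists_pos_xBranchSq_eq {y : ℝ} (hy : y ^ 2 < 1 / 4) :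
    ∃ c > 0, xBranchSq y = (yMax ^ 2 - y ^ 2) * c := by
  have hd : 4 - 16 * y ^ 2 ≠ 0 := by linarith
  refine ⟨16 * ((5 + Real.sqrt 13) / 8 - y ^ 2) / (4 - 16 * y ^ 2),
    div_pos (by nlinarith [sqrt_thirteen_gt_three]) (by linarith), ?_⟩
  rw [xBranchSq, yMax_sq, ← mul_div_assoc, eq_div_iff hd, sub_mul, one_div_mul_cancel hd]
  linear_combination (1 / 4 : ℝ) * Real.sq_sqrt (show (0 : ℝ) ≤ 13 by norm_num)

lemma xBranchSq_nonneg_iff {y : ℝ} (hy : y ^ 2 < 1 / 4) :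
    0 ≤ xBranchSq y ↔ |y| ≤ yMax := by
  obtain ⟨c, hc, h⟩ := exists_pos_xBranchSq_eq hy
  rw [h, mul_nonneg_iff_of_pos_right hc, sub_nonneg, sq_le_sq, abs_of_nonneg yMax_nonneg]

lemma xBranchSq_eq_zero_iff {y : ℝ} (hy : y ^ 2 < 1 / 4) :
    xBranchSq y = 0 ↔ |y| = yMax := by
  obtain ⟨c, hc, h⟩ := exists_pos_xBranchSq_eq hy
  rw [h, mul_eq_zero, or_iff_left hc.ne', sub_eq_zero, eq_comm, sq_eq_sq_iff_abs_eq_abs,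
    abs_of_nonneg yMax_nonneg]

lemma sq_lt_of_abs_le_yMax {y : ℝ} (hy : |y| ≤ yMax) : y ^ 2 < 1 / 4 :=
  (sq_le_sq' (abs_le.1 hy).1 (abs_le.1 hy).2).trans_lt yMax_sq_lt

lemma xBranch_sq {y : ℝ} (hy : |y| ≤ yMax) :
    xBranch y ^ 2 = xBranchSq y :=
  Real.sq_sqrt ((xBranchSq_nonneg_iff (sq_lt_of_abs_le_yMax hy)).2 hy)

lemma xBranch_eq_zero_iff {y : ℝ} (hy : |y| ≤ yMax) : xBranch y = 0 ↔ |y| = yMax := by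
  rw [← sq_eq_zero_iff, xBranch_sq hy, xBranchSq_eq_zero_iff (sq_lt_of_abs_le_yMax hy)]

lemma curve_iff_branch {x y : ℝ} :
    (1 - x ^ 2 - y ^ 2) * (4 - 16 * y ^ 2) = 1 ∧ 0 < 1 - x ^ 2 - y ^ 2 ↔
      |y| ≤ yMax ∧ x ^ 2 = xBranchSq y := by
  constructor
  · rintro ⟨hcurve, hpos⟩
    have hd : 0 < 4 - 16 * y ^ 2 := pos_of_mul_pos_right (by rw [hcurve]; exact one_pos) hpos.le
    have hx : x ^ 2 = xBranchSq y := by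
      rw [xBranchSq, ← eq_one_div_of_mul_eq_one_left hcurve]; ring
    refine ⟨(xBranchSq_nonneg_iff (by linarith)).1 (hx ▸ sq_nonneg x), hx⟩
  · rintro ⟨hy, hx⟩
    have hd : 0 < 4 - 16 * y ^ 2 := by linarith [sq_lt_of_abs_le_yMax hy]
    have hu : 1 - x ^ 2 - y ^ 2 = 1 / (4 - 16 * y ^ 2) := by rw [hx, xBranchSq]; ring
    rw [hu]
    exact ⟨one_div_mul_cancel hd.ne', by positivity⟩

lemma mem_W₂_iff {x y τ : ℝ} :
    (x, y, τ) ∈ W₂ ↔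
      (1 - x ^ 2 - y ^ 2) * (4 - 16 * y ^ 2) = 1 ∧ 0 < 1 - x ^ 2 - y ^ 2 ∧ τ = tauOf x y := by
  have hquartic : 16 * y ^ 4 - 20 * y ^ 2 + 16 * x ^ 2 * y ^ 2 - 4 * x ^ 2 + 3 =
      (1 - x ^ 2 - y ^ 2) * (4 - 16 * y ^ 2) - 1 := by ring
  have hD : (1 - x ^ 2) * (1 - y ^ 2) = (1 - x ^ 2 - y ^ 2) + (x * y) ^ 2 := by ring
  constructor
  · rintro ⟨hx, hy, hτ, hp, hq⟩
    have hcurve : (1 - x ^ 2 - y ^ 2) * (4 - 16 * y ^ 2) = 1 := by linarith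
    have hD₀ : 0 ≤ (1 - x ^ 2) * (1 - y ^ 2) :=
      mul_nonneg (by linarith [sq_le_one_iff_abs_le_one x |>.2 hx])
        (by linarith [sq_le_one_iff_abs_le_one y |>.2 hy])
    have hxy : (x * y) ^ 2 ≤ (1 - x ^ 2) * (1 - y ^ 2) := by
      rw [hp, mul_pow, Real.sq_sqrt hD₀]
      exact mul_le_of_le_one_right hD₀ ((sq_le_one_iff_abs_le_one τ).2 hτ)
    have hpos : 0 < 1 - x ^ 2 - y ^ 2 := by
      refine lt_of_le_of_ne (by linarith) fun h ↦ ?_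
      rw [← h, zero_mul] at hcurve
      exact zero_ne_one hcurve
    refine ⟨hcurve, hpos, ?_⟩
    have hsqrt : 0 < Real.sqrt ((1 - x ^ 2) * (1 - y ^ 2)) :=
      Real.sqrt_pos.2 (by rw [hD]; positivity)
    rw [tauOf, hp, mul_div_cancel_left₀ _ hsqrt.ne']
  · rintro ⟨hcurve, hpos, rfl⟩
    have hsqrt : 0 < Real.sqrt ((1 - x ^ 2) * (1 - y ^ 2)) :=
      Real.sqrt_pos.2 (by rw [hD]; positivity)
    refine ⟨(sq_le_one_iff_abs_le_one x).1 (by nlinarith),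
      (sq_le_one_iff_abs_le_one y).1 (by nlinarith), ?_, ?_, by linarith⟩
    · rw [tauOf, abs_div, abs_of_pos hsqrt]
      exact div_le_one_of_le₀ (Real.abs_le_sqrt (by rw [hD]; linarith)) hsqrt.le
    · exact (mul_div_cancel₀ _ hsqrt.ne').symm

lemma mem_arc_iff {g : ℝ → ℝ} {x y τ : ℝ} :
    (x, y, τ) ∈ {w : ℝ × ℝ × ℝ | ∃ y ∈ Icc (-yMax) yMax, w = (g y, y, tauOf (g y) y)} ↔
      |y| ≤ yMax ∧ x = g y ∧ τ = tauOf x y := by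
  simp only [mem_ofPred_eq, Prod.mk.injEq, mem_Icc, ← abs_le]
  constructor
  · rintro ⟨y, hy, rfl, rfl, rfl⟩
    exact ⟨hy, rfl, rfl⟩
  · rintro ⟨hy, rfl, rfl⟩
    exact ⟨y, hy, rfl, rfl, rfl⟩

lemma mem_arcPos_iff {x y τ : ℝ} :
    (x, y, τ) ∈ arcPos ↔ |y| ≤ yMax ∧ x = xBranch y ∧ τ = tauOf x y :=
  mem_arc_iff

lemma mem_arcNeg_iff {x y τ : ℝ} :
    (x, y, τ) ∈ arcNeg ↔ |y| ≤ yMax ∧ x = -xBranch y ∧ τ = tauOf x y :=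
  mem_arc_iff (g := fun y ↦ -xBranch y)

lemma W₂_eq_arcPos_union_arcNeg : W₂ = arcPos ∪ arcNeg := by
  ext ⟨x, y, τ⟩
  rw [mem_W₂_iff, ← and_assoc, curve_iff_branch, mem_union, mem_arcPos_iff, mem_arcNeg_iff]
  constructor
  · rintro ⟨⟨hy, hx⟩, hτ⟩
    rw [← xBranch_sq hy, sq_eq_sq_iff_eq_or_eq_neg] at hx
    rcases hx with hx | hx
    exacts [Or.inl ⟨hy, hx, hτ⟩, Or.inr ⟨hy, hx, hτ⟩]
  · rintro (⟨hy, rfl, hτ⟩ | ⟨hy, rfl, hτ⟩)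
    · exact ⟨⟨hy, xBranch_sq hy⟩, hτ⟩
    · exact ⟨⟨hy, by rw [neg_sq, xBranch_sq hy]⟩, hτ⟩

lemma arcPos_inter_arcNeg : arcPos ∩ arcNeg = {(0, yMax, 0), (0, -yMax, 0)} := by
  ext ⟨x, y, τ⟩
  rw [mem_inter_iff, mem_arcPos_iff, mem_arcNeg_iff, mem_insert_iff, mem_singleton_iff]
  simp only [Prod.mk.injEq]
  constructor
  · rintro ⟨⟨hy, rfl, rfl⟩, -, hneg, -⟩
    have hx : xBranch y = 0 := by linarith
    rw [hx]
    simpa [tauOf] using (abs_eq yMax_nonneg).1 ((xBranch_eq_zero_iff hy).1 hx)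
  · intro h
    have habs : |y| = yMax := by
      rcases h with ⟨-, rfl, -⟩ | ⟨-, rfl, -⟩ <;> simp [abs_of_nonneg yMax_nonneg]
    have hx : xBranch y = 0 := (xBranch_eq_zero_iff habs.le).2 habs
    rcases h with ⟨rfl, -, rfl⟩ | ⟨rfl, -, rfl⟩ <;> simp [habs, hx, tauOf]

lemma exists_radial_root (a : ℝ) : ∃ r ∈ Ioo (0 : ℝ) 1, (1 - r) * (4 - 16 * a * r) = 1 := by
  obtain ⟨r, hr, hgr⟩ := intermediate_value_Icc' zero_le_one
    (f := fun r : ℝ ↦ (1 - r) * (4 - 16 * a * r)) (by fun_prop) (show (1 : ℝ) ∈ Icc _ _ by norm_num)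
  refine ⟨r, ⟨lt_of_le_of_ne hr.1 ?_, lt_of_le_of_ne hr.2 ?_⟩, hgr⟩ <;>
    rintro rfl <;> norm_num at hgr

lemma radial_root_unique {a r₁ r₂ : ℝ} (ha : 0 ≤ a) (hr₁ : r₁ < 1) (hr₂ : r₂ < 1)
    (h₁ : (1 - r₁) * (4 - 16 * a * r₁) = 1) (h₂ : (1 - r₂) * (4 - 16 * a * r₂) = 1) :
    r₁ = r₂ := by
  have hb₁ : 0 < 4 - 16 * a * r₁ := pos_of_mul_pos_right (by rw [h₁]; exact one_pos) (by linarith)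
  have hfactor : (r₁ - r₂) * (16 * a * (r₁ + r₂ - 1) - 4) = 0 := by linear_combination h₁ - h₂
  -- `16 a r₁ < 4` and `a (r₂ - 1) ≤ 0`
  have hneg : 16 * a * (r₁ + r₂ - 1) - 4 < 0 := by nlinarith
  exact sub_eq_zero.1 ((mul_eq_zero.1 hfactor).resolve_right hneg.ne)

theorem Circle.nonempty_homeomorph_of_existsUnique_ray {X : Type*} [TopologicalSpace X]
    [CompactSpace X] {f : X → ℂ} (hf : Continuous f) (hf₀ : ∀ x, f x ≠ 0)
    (hray : ∀ z : Circle, ∃! x, ∃ t : ℝ, 0 < t ∧ f x = t * z) : Nonempty (X ≃ₜ Circle) := by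
  let p : X → Circle := fun x ↦
    ⟨f x / ‖f x‖, mem_sphere_zero_iff_norm.2 (by simp [hf₀ x])⟩
  have hpolar (x : X) : f x = ‖f x‖ * p x :=
    (mul_div_cancel₀ _ (by simpa using hf₀ x)).symm
  have hp : Continuous p := (hf.div (by fun_prop) (by simpa using hf₀)).subtype_mk _
  have hinj : Function.Injective p := fun x y hxy ↦ (hray (p x)).unique
    ⟨‖f x‖, norm_pos_iff.2 (hf₀ x), hpolar x⟩ ⟨‖f y‖, norm_pos_iff.2 (hf₀ y), hxy ▸ hpolar y⟩
  have hsurj : Function.Surjective p := fun z ↦ by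
    obtain ⟨x, ⟨t, ht, hx⟩, -⟩ := hray z
    have hnorm : ‖f x‖ = t := by
      rw [hx, norm_mul, Circle.norm_coe, mul_one, Complex.norm_real, Real.norm_of_nonneg ht.le]
    refine ⟨x, Circle.ext ?_⟩
    calc (p x : ℂ) = f x / ‖f x‖ := rfl
      _ = z := by rw [hnorm, hx, mul_div_cancel_left₀ _ (Complex.ofReal_ne_zero.2 ht.ne')]
  exact ⟨hp.homeoOfEquivCompactToT2 (f := Equiv.ofBijective p ⟨hinj, hsurj⟩)⟩

lemma isCompact_W₂ : IsCompact W₂ := by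
  have hclosed : IsClosed W₂ := by
    simp only [W₂, ofPred_and]
    exact (isClosed_le (by fun_prop) continuous_const).inter <|
      (isClosed_le (by fun_prop) continuous_const).inter <|
        (isClosed_le (by fun_prop) continuous_const).inter <|
          (isClosed_eq (by fun_prop) (by fun_prop)).inter
            (isClosed_eq (by fun_prop) continuous_const)
  refine Metric.isCompact_of_isClosed_isBounded hclosed
    ((Metric.isBounded_closedBall (x := 0) (r := 1)).subset fun w hw ↦ ?_)
  obtain ⟨hx, hy, hτ, -⟩ := hw
  simpa [Prod.norm_def] using ⟨hx, hy, hτ⟩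

lemma mem_W₂_polar_iff {c s t τ : ℝ} (hcs : c ^ 2 + s ^ 2 = 1) :
    (t * c, t * s, τ) ∈ W₂ ↔
      (1 - t ^ 2) * (4 - 16 * s ^ 2 * t ^ 2) = 1 ∧ t ^ 2 < 1 ∧ τ = tauOf (t * c) (t * s) := by
  have hr : 1 - (t * c) ^ 2 - (t * s) ^ 2 = 1 - t ^ 2 := by linear_combination -t ^ 2 * hcs
  rw [mem_W₂_iff, hr, sub_pos, show 16 * (t * s) ^ 2 = 16 * s ^ 2 * t ^ 2 by ring]

lemma ofReal_add_mul_I_eq_ofReal_mul_iff {x y t : ℝ} {z : ℂ} :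
    (x + y * Complex.I : ℂ) = t * z ↔ x = t * z.re ∧ y = t * z.im := by
  simp [Complex.ext_iff]

lemma existsUnique_W₂_ray (z : Circle) :
    ∃! w : W₂, ∃ t : ℝ, 0 < t ∧ (w.1.1 + w.1.2.1 * Complex.I : ℂ) = t * z := by
  have hcs : (z : ℂ).re ^ 2 + (z : ℂ).im ^ 2 = 1 := by
    have h := congrArg (· ^ 2) (Circle.norm_coe z)
    simp only [Complex.sq_norm, Complex.normSq_apply] at h
    linear_combination h
  obtain ⟨r, ⟨hr₀, hr₁⟩, hr⟩ := exists_radial_root ((z : ℂ).im ^ 2)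
  set t := Real.sqrt r
  have ht : t ^ 2 = r := Real.sq_sqrt hr₀.le
  have hw : (t * (z : ℂ).re, t * (z : ℂ).im, tauOf (t * (z : ℂ).re) (t * (z : ℂ).im)) ∈ W₂ :=
    (mem_W₂_polar_iff hcs).2 ⟨by rwa [ht], by rwa [ht], rfl⟩
  refine ⟨⟨_, hw⟩, ⟨t, Real.sqrt_pos.2 hr₀, ofReal_add_mul_I_eq_ofReal_mul_iff.2 ⟨rfl, rfl⟩⟩, ?_⟩
  rintro ⟨⟨x, y, τ⟩, hw'⟩ ⟨t', ht', hxy⟩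
  obtain ⟨rfl, rfl⟩ := ofReal_add_mul_I_eq_ofReal_mul_iff.1 hxy
  obtain ⟨hcurve, hlt, rfl⟩ := (mem_W₂_polar_iff hcs).1 hw'
  have hsq : t' ^ 2 = t ^ 2 := ht ▸ radial_root_unique (sq_nonneg _) hlt hr₁ hcurve hr
  obtain rfl := (sq_eq_sq₀ ht'.le (Real.sqrt_nonneg r)).1 hsq
  rfl

/-- `W₂` is the union of the two arcs, the arcs meet exactly in their common
endpoints `(0, ±√((5−√13)/8), 0)`, and `W₂` is homeomorphic to a circle. -/
theorem W₂_is_a_circle :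
    W₂ = arcPos ∪ arcNeg ∧
    arcPos ∩ arcNeg = {(0, yMax, 0), (0, -yMax, 0)} ∧
    Nonempty (W₂ ≃ₜ Circle) := by
  have : CompactSpace W₂ := isCompact_iff_compactSpace.1 isCompact_W₂
  have hxy₀ (w : W₂) : (w.1.1 + w.1.2.1 * Complex.I : ℂ) ≠ 0 := by
    obtain ⟨⟨x, y, τ⟩, hw⟩ := w
    intro h
    obtain ⟨rfl, rfl⟩ : x = 0 ∧ y = 0 := by simpa [Complex.ext_iff] using h
    norm_num [mem_W₂_iff] at hw
  exact ⟨W₂_eq_arcPos_union_arcNeg, arcPos_inter_arcNeg,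
    Circle.nonempty_homeomorph_of_existsUnique_ray (by fun_prop) hxy₀ existsUnique_W₂_ray⟩

end
end
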